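/- arXiv:1610.01357 — 6 statements merged into one kernel-verified Lean document; each statement's English description precedes it below -/
import Mathlib

section
/- For a finite simple graph G = (V,E) and real p ≥ 1, the minimum q_p(G) of Q_p(x) = Σ_{ij∈E} |x_i + x_j|^p over all x with Σ_{i∈V} |x_i|^p = 1 equals zero if and only if G has a bipartite connected component. -/
open Finset

variable {V : Type*}

/-- Signless p-Laplacian form: `Q_p(x) = Σ_{{i,j}∈E} |x_i + x_j|^p`. -/
noncomputable def Qp [Fintype V] (G : SimpleGraph V) [Fintype G.edgeSet] (p : ℝ)
    (x : V → ℝ) : ℝ :=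
  ∑ e ∈ G.edgeFinset,
    Sym2.lift ⟨fun i j => |x i + x j| ^ p, fun i j => by simp [add_comm]⟩ e

/-- The p-norm unit sphere condition. -/
def unitSphere [Fintype V] (p : ℝ) (x : V → ℝ) : Prop := ∑ i, |x i| ^ p = 1

/-- Smallest signless p-Laplacian eigenvalue. -/
noncomputable def qp [Fintype V] (G : SimpleGraph V) [Fintype G.edgeSet] (p : ℝ) : ℝ :=
  sInf {r | ∃ x : V → ℝ, unitSphere p x ∧ Qp G p x = r}

/-- Largest signless p-Laplacian eigenvalue. -/
noncomputable def lamp [Fintype V] (G : SimpleGraph V) [Fintype G.edgeSet] (p : ℝ) : ℝ :=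
  sSup {r | ∃ x : V → ℝ, unitSphere p x ∧ Qp G p x = r}

open Classical in
/-- Number of edges with both endpoints in `S`. -/
noncomputable def eIn [Fintype V] (G : SimpleGraph V) [Fintype G.edgeSet] (S : Finset V) : ℕ :=
  (G.edgeFinset.filter fun e => ∀ v ∈ e, v ∈ S).card

open Classical in
/-- Number of edges with exactly one endpoint in `U`. -/
noncomputable def cutN [Fintype V] (G : SimpleGraph V) [Fintype G.edgeSet] (U : Finset V) : ℕ :=
  (G.edgeFinset.filter fun e => (∃ v ∈ e, v ∈ U) ∧ (∃ w ∈ e, w ∉ U)).card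

/-- Desai–Rao bipartiteness parameter ψ(G). -/
noncomputable def psi [Fintype V] [DecidableEq V] (G : SimpleGraph V) [Fintype G.edgeSet] : ℝ :=
  sInf {r | ∃ S T : Finset V, Disjoint S T ∧ (S ∪ T).Nonempty ∧
    r = (2 * eIn G S + 2 * eIn G T + cutN G (S ∪ T)) / (S ∪ T).card}

open Classical in
/-- `h_g(U)`: min over thresholds `0 ≤ t < max g` of `cut(C_t)/|C_t|` where `C_t = {i : g i > t}`. -/
noncomputable def hgC [Fintype V] [DecidableEq V] (G : SimpleGraph V) [Fintype G.edgeSet]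
    (g : V → ℝ) : ℝ :=
  sInf {r | ∃ t : ℝ, 0 ≤ t ∧ t < sSup (Set.range g) ∧
    r = (cutN G (univ.filter fun i => t < g i) : ℝ) / (univ.filter fun i => t < g i).card}

/-- Eigenpair of the signless p-Laplacian. -/
def IsEigenpair [Fintype V] (G : SimpleGraph V) [DecidableRel G.Adj] (p : ℝ)
    (x : V → ℝ) (μ : ℝ) : Prop :=
  ∀ k, ∑ j ∈ G.neighborFinset k, Real.sign (x k + x j) * |x k + x j| ^ (p - 1)
      = μ * (Real.sign (x k) * |x k| ^ (p - 1))

/-- Vertex bipartiteness: minimum number of vertices to delete to make `G` bipartite. -/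
noncomputable def nuG [Fintype V] [DecidableEq V] (G : SimpleGraph V) : ℕ :=
  sInf {k | ∃ S : Finset V, S.card = k ∧ ((SimpleGraph.induce ((↑S : Set V)ᶜ) G).Colorable 2)}

section Aux
variable [Fintype V]

lemma Qp_nonneg (G : SimpleGraph V) [Fintype G.edgeSet] (p : ℝ) (x : V → ℝ) :
    0 ≤ Qp G p x :=
  Finset.sum_nonneg fun e _ => by
    induction e using Sym2.ind with
    | _ i j => simpa using Real.rpow_nonneg (abs_nonneg _) p

lemma Qp_continuous (G : SimpleGraph V) [Fintype G.edgeSet] {p : ℝ} (hp : 0 ≤ p) :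
    Continuous fun x : V → ℝ => Qp G p x := by
  unfold Qp
  refine continuous_finset_sum _ fun e _ => ?_
  induction e using Sym2.ind with
  | _ i j =>
    simp only [Sym2.lift_mk]
    exact (((continuous_apply i).add (continuous_apply j)).abs).rpow_const fun _ => Or.inr hp

/-- If `Qp G p x = 0` then every edge sum vanishes. -/
lemma edge_sum_eq_zero (G : SimpleGraph V) [Fintype G.edgeSet] {p : ℝ} (hp : p ≠ 0)
    {x : V → ℝ} (h : Qp G p x = 0) {u w : V} (huw : G.Adj u w) : x u + x w = 0 := by
  have hmem : s(u, w) ∈ G.edgeFinset := by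
    rw [SimpleGraph.mem_edgeFinset, SimpleGraph.mem_edgeSet]; exact huw
  have h0 := (Finset.sum_eq_zero_iff_of_nonneg (fun e _ => by
    induction e using Sym2.ind with
    | _ i j => simpa using Real.rpow_nonneg (abs_nonneg _) p)).mp h _ hmem
  simp only [Sym2.lift_mk] at h0
  have := (Real.rpow_eq_zero (abs_nonneg _) hp).mp h0
  exact abs_eq_zero.mp this

end Aux

lemma exists_zero_witness [Fintype V] (G : SimpleGraph V) [DecidableRel G.Adj]
    {p : ℝ} (hp : 1 ≤ p) (c : G.ConnectedComponent)
    (hc : (G.induce c.supp).Colorable 2) :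
    ∃ x : V → ℝ, unitSphere p x ∧ Qp G p x = 0 := by
  classical
  have hp0 : p ≠ 0 := by intro h; rw [h] at hp; linarith
  obtain ⟨C⟩ := hc
  set Sfin : Finset V := Finset.univ.filter (fun v => v ∈ c.supp) with hS
  obtain ⟨v0, hv0⟩ := c.exists_rep
  have hv0' : v0 ∈ c.supp := by
    rw [SimpleGraph.ConnectedComponent.mem_supp_iff, ← hv0]
    rfl
  have hcard : 0 < Sfin.card := Finset.card_pos.mpr
    ⟨v0, by rw [hS, Finset.mem_filter]; exact ⟨Finset.mem_univ _, hv0'⟩⟩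
  set n : ℝ := (Sfin.card : ℝ) with hn'
  have hn : 0 < n := by rw [hn']; exact_mod_cast hcard
  set t : ℝ := n ^ (-p⁻¹) with ht
  have htpos : 0 < t := Real.rpow_pos_of_pos hn _
  have htp : t ^ p = n⁻¹ := by
    rw [ht, ← Real.rpow_mul hn.le, neg_mul, inv_mul_cancel₀ hp0, Real.rpow_neg_one]
  set x : V → ℝ := fun v => if h : v ∈ c.supp then (if C ⟨v, h⟩ = 0 then (1:ℝ) else -1) * t
    else 0 with hx
  have habs : ∀ v, |x v| ^ p = if v ∈ c.supp then n⁻¹ else 0 := by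
    intro v
    by_cases h : v ∈ c.supp
    · have hxv : x v = (if C ⟨v, h⟩ = 0 then (1:ℝ) else -1) * t := dif_pos h
      have habs1 : |(if C ⟨v, h⟩ = 0 then (1:ℝ) else -1) * t| = t := by
        split <;> simp [abs_of_pos htpos]
      rw [hxv, if_pos h, habs1, htp]
    · have hxv : x v = 0 := dif_neg h
      rw [hxv, if_neg h, abs_zero, Real.zero_rpow hp0]
  refine ⟨x, ?_, ?_⟩
  · show ∑ i, |x i| ^ p = 1
    calc ∑ i, |x i| ^ p = ∑ i, if i ∈ c.supp then n⁻¹ else 0 := by simp [habs]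
    _ = ∑ _i ∈ Sfin, n⁻¹ := by rw [hS, Finset.sum_filter]
    _ = 1 := by rw [Finset.sum_const, nsmul_eq_mul, ← hn', mul_inv_cancel₀ hn.ne']
  · refine Finset.sum_eq_zero fun e he => ?_
    induction e using Sym2.ind with
    | _ i j =>
      rw [SimpleGraph.mem_edgeFinset, SimpleGraph.mem_edgeSet] at he
      simp only [Sym2.lift_mk]
      have hzero : x i + x j = 0 := by
        by_cases hi : i ∈ c.supp
        · have hj : j ∈ c.supp := by
            rw [SimpleGraph.ConnectedComponent.mem_supp_iff] at hi ⊢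
            rw [← hi]
            exact SimpleGraph.ConnectedComponent.eq.mpr he.symm.reachable
          have hadj : (G.induce c.supp).Adj ⟨i, hi⟩ ⟨j, hj⟩ := by simpa using he
          have hC := C.valid hadj
          simp only [hx, dif_pos hi, dif_pos hj]
          have h2 : ∀ a : Fin 2, a = 0 ∨ a = 1 := by decide
          rcases h2 (C ⟨i, hi⟩) with h1 | h1 <;> rcases h2 (C ⟨j, hj⟩) with h2' | h2' <;>
            simp [h1, h2'] at hC ⊢
        · have hj : j ∉ c.supp := by
            intro hj; apply hi
            rw [SimpleGraph.ConnectedComponent.mem_supp_iff] at hj ⊢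
            rw [← hj]
            exact SimpleGraph.ConnectedComponent.eq.mpr he.reachable
          have h1 : x i = 0 := dif_neg hi
          have h2 : x j = 0 := dif_neg hj
          rw [h1, h2, add_zero]
      rw [hzero, abs_zero, Real.zero_rpow hp0]

lemma qp_attained [Fintype V] [Nonempty V] (G : SimpleGraph V) [Fintype G.edgeSet]
    {p : ℝ} (hp : 1 ≤ p) :
    ∃ x : V → ℝ, unitSphere p x ∧ Qp G p x = qp G p := by
  classical
  have hp0 : (0:ℝ) < p := zero_lt_one.trans_le hp
  set K : Set (V → ℝ) := {x | ∑ i, |x i| ^ p = 1} with hKdef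
  have hcont : Continuous fun x : V → ℝ => ∑ i, |x i| ^ p :=
    continuous_finset_sum _ fun i _ =>
      ((continuous_apply i).abs).rpow_const fun _ => Or.inr hp0.le
  have hclosed : IsClosed K := isClosed_eq hcont continuous_const
  have hsub : K ⊆ Metric.closedBall 0 1 := by
    intro x hx
    rw [Metric.mem_closedBall, dist_zero_right,
      pi_norm_le_iff_of_nonneg zero_le_one]
    intro i
    rw [Real.norm_eq_abs]
    by_contra hgt
    push_neg at hgt
    have h1 : 1 < |x i| ^ p := (Real.one_lt_rpow_iff (abs_nonneg _)).mpr (Or.inl ⟨hgt, hp0⟩)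
    have h2 : |x i| ^ p ≤ ∑ j, |x j| ^ p :=
      Finset.single_le_sum (fun j _ => Real.rpow_nonneg (abs_nonneg _) p) (Finset.mem_univ i)
    rw [hx] at h2
    linarith
  have hK : IsCompact K := (isCompact_closedBall 0 1).of_isClosed_subset hclosed hsub
  have hKne : K.Nonempty := by
    refine ⟨fun v => if v = Classical.arbitrary V then 1 else 0, ?_⟩
    show ∑ i, |(if i = Classical.arbitrary V then (1:ℝ) else 0)| ^ p = 1
    rw [Finset.sum_eq_single (Classical.arbitrary V)]
    · simp [Real.one_rpow]
    · intro b _ hb; simp [hb, Real.zero_rpow hp0.ne']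
    · simp
  have himg : {r | ∃ x : V → ℝ, unitSphere p x ∧ Qp G p x = r} = (fun x => Qp G p x) '' K := by
    ext r
    constructor
    · rintro ⟨x, hx, rfl⟩; exact ⟨x, hx, rfl⟩
    · rintro ⟨x, hx, rfl⟩; exact ⟨x, hx, rfl⟩
  have hc : IsCompact ((fun x => Qp G p x) '' K) := hK.image (Qp_continuous G hp0.le)
  have hmem := hc.sInf_mem (hKne.image _)
  rw [qp, himg]
  obtain ⟨x, hx, hx2⟩ := hmem
  exact ⟨x, hx, hx2⟩

theorem stmt_0 [Fintype V] [DecidableEq V] [Nonempty V] (G : SimpleGraph V)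
    [DecidableRel G.Adj] (p : ℝ) (hp : 1 ≤ p) :
    qp G p = 0 ↔ ∃ c : G.ConnectedComponent, (G.induce c.supp).Colorable 2 := by
  constructor
  · intro hq
    have hp0 : p ≠ 0 := by intro h; rw [h] at hp; linarith
    obtain ⟨x, hxs, hxq⟩ := qp_attained G hp
    rw [hq] at hxq
    have hzero : ∀ u w, G.Adj u w → x u + x w = 0 := fun u w h =>
      edge_sum_eq_zero G hp0 hxq h
    have hex : ∃ i, x i ≠ 0 := by
      by_contra hall
      push_neg at hall
      have hz : ∑ i, |x i| ^ p = 0 := Finset.sum_eq_zero fun i _ => by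
        rw [hall i, abs_zero, Real.zero_rpow hp0]
      have hone : ∑ i, |x i| ^ p = 1 := hxs
      rw [hz] at hone
      exact one_ne_zero hone.symm
    obtain ⟨i0, hi0⟩ := hex
    set c := G.connectedComponentMk i0 with hcdef
    have key : ∀ a b : V, G.Walk a b → x a ≠ 0 → x b ≠ 0 := by
      intro a b w
      induction w with
      | nil => exact id
      | cons h q ih =>
        intro ha
        refine ih ?_
        have hs := hzero _ _ h
        intro hb
        exact ha (by linarith)
    have hsupp : ∀ v ∈ c.supp, x v ≠ 0 := by
      intro v hv
      rw [SimpleGraph.ConnectedComponent.mem_supp_iff, hcdef] at hv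
      obtain ⟨w⟩ := (SimpleGraph.ConnectedComponent.eq.mp hv).symm
      exact key i0 v w hi0
    refine ⟨c, ⟨SimpleGraph.Coloring.mk (fun v => if 0 < x v.1 then 0 else 1) ?_⟩⟩
    intro u v hadj
    have hG : G.Adj u.1 v.1 := by simpa using hadj
    have hsum := hzero _ _ hG
    have hu := hsupp u.1 u.2
    by_cases h1 : 0 < x u.1
    · have h2 : ¬ 0 < x v.1 := by intro h2; linarith
      simp [h1, h2]
    · have hu' : x u.1 < 0 := lt_of_le_of_ne (not_lt.mp h1) hu
      have h2 : 0 < x v.1 := by linarith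
      simp [h1, h2]
  · rintro ⟨c, hc⟩
    obtain ⟨x, hxs, hxq⟩ := exists_zero_witness G hp c hc
    have hmem : (0:ℝ) ∈ {r | ∃ x : V → ℝ, unitSphere p x ∧ Qp G p x = r} := ⟨x, hxs, hxq⟩
    refine le_antisymm (csInf_le ⟨0, ?_⟩ hmem) (le_csInf ⟨0, hmem⟩ ?_)
    · rintro r ⟨y, hy, rfl⟩
      exact Qp_nonneg G p y
    · rintro r ⟨y, hy, rfl⟩
      exact Qp_nonneg G p y
end

section
/- For p ≥ 1 and any disjoint vertex sets S, T ⊆ V with S ∪ T nonempty, q_p(G)·|S ∪ T| ≤ 2^p·e(S) + 2^p·e(T) + cut(S ∪ T), where e(S) is the number of edges inside S and cut(U) the number of edges with exactly one endpoint in U. -/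
open Finset

variable {V : Type*}

theorem stmt_1 [Fintype V] [DecidableEq V] (G : SimpleGraph V) [DecidableRel G.Adj]
    (p : ℝ) (hp : 1 ≤ p) (S T : Finset V) (hST : Disjoint S T) (hne : (S ∪ T).Nonempty) :
    qp G p * (S ∪ T).card ≤
      (2 : ℝ) ^ p * eIn G S + (2 : ℝ) ^ p * eIn G T + cutN G (S ∪ T) := by
  classical
  have hp0 : (0:ℝ) < p := lt_of_lt_of_le one_pos hp
  set n : ℕ := (S ∪ T).card with hn
  have hn0 : 0 < n := Finset.card_pos.2 hne
  have hnR : (0:ℝ) < n := by exact_mod_cast hn0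
  set c : ℝ := (n:ℝ) ^ (-(1/p)) with hc
  have hc0 : 0 < c := Real.rpow_pos_of_pos hnR _
  have hcp : c ^ p = (n:ℝ)⁻¹ := by
    rw [hc, ← Real.rpow_mul hnR.le]
    have : (-(1/p))*p = -1 := by field_simp
    rw [this, Real.rpow_neg_one]
  set x : V → ℝ := fun i => if i ∈ S then c else if i ∈ T then -c else 0 with hx
  have habs : ∀ i, |x i| ^ p = if i ∈ S ∪ T then (n:ℝ)⁻¹ else 0 := by
    intro i
    by_cases hiS : i ∈ S
    · simp [hx, hiS, abs_of_pos hc0, hcp, Finset.mem_union]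
    · by_cases hiT : i ∈ T
      · simp [hx, hiS, hiT, abs_of_pos hc0, hcp, Finset.mem_union]
      · simp [hx, hiS, hiT, Finset.mem_union, Real.zero_rpow hp0.ne']
  have hunit : unitSphere p x := by
    unfold unitSphere
    rw [Finset.sum_congr rfl fun i _ => habs i]
    rw [Finset.sum_ite_mem, Finset.univ_inter, Finset.sum_const, ← hn,
      nsmul_eq_mul, mul_inv_cancel₀ hnR.ne']
  have h2c : |c + c| ^ p = (2:ℝ)^p * (n:ℝ)⁻¹ := by
    have : |c + c| = 2 * c := by rw [abs_of_pos (by linarith)]; ring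
    rw [this, Real.mul_rpow (by norm_num) hc0.le, hcp]
  have hedge : Qp G p x ≤
      ((2:ℝ)^p * eIn G S + (2:ℝ)^p * eIn G T + cutN G (S ∪ T)) / n := by
    unfold Qp eIn cutN
    rw [Finset.card_filter, Finset.card_filter, Finset.card_filter]
    push_cast
    rw [Finset.mul_sum, Finset.mul_sum, ← Finset.sum_add_distrib, ← Finset.sum_add_distrib,
      Finset.sum_div]
    simp only [div_eq_mul_inv]
    refine Finset.sum_le_sum ?_
    intro e he
    induction e using Sym2.inductionOn with
    | hf i j =>
      simp only [Sym2.lift_mk, Sym2.mem_iff, mul_ite, mul_one, mul_zero]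
      have hm2c : |-c + -c| ^ p = (2:ℝ)^p * (n:ℝ)⁻¹ := by
        rw [show -c + -c = -(c+c) by ring, abs_neg, h2c]
      have hcc : |c| ^ p = ((n:ℝ))⁻¹ := by rw [abs_of_pos hc0, hcp]
      have hmcc : |-c| ^ p = ((n:ℝ))⁻¹ := by rw [abs_neg, hcc]
      have ha : (0:ℝ) ≤ (2:ℝ)^p * ((n:ℝ))⁻¹ :=
        mul_nonneg (Real.rpow_nonneg (by norm_num) p) (inv_nonneg.2 hnR.le)
      have hb : (0:ℝ) ≤ ((n:ℝ))⁻¹ := inv_nonneg.2 hnR.le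
      by_cases hiS : i ∈ S <;> by_cases hiT : i ∈ T <;>
        by_cases hjS : j ∈ S <;> by_cases hjT : j ∈ T <;>
        simp only [hx, hiS, hiT, hjS, hjT, if_true, if_false, Finset.mem_union] <;>
        norm_num [hiS, hiT, hjS, hjT, h2c, hm2c, hcc, hmcc,
          Real.zero_rpow hp0.ne', abs_neg, add_neg_cancel, neg_add_cancel] <;>
        linarith
  have hq : qp G p ≤ Qp G p x := by
    apply csInf_le
    · refine ⟨0, ?_⟩
      rintro r ⟨y, -, rfl⟩
      apply Finset.sum_nonneg
      intro e _
      induction e using Sym2.inductionOn with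
      | hf i j => simp only [Sym2.lift_mk]; positivity
    · exact ⟨x, hunit, rfl⟩
  calc qp G p * n ≤ (((2:ℝ)^p * eIn G S + (2:ℝ)^p * eIn G T + cutN G (S ∪ T)) / n) * n := by
        apply mul_le_mul_of_nonneg_right (hq.trans hedge) hnR.le
    _ = _ := div_mul_cancel₀ _ hnR.ne'
end

section
/- (Co-area-type inequality) Let G' = (V',E') be a finite simple graph, U ⊆ V', and g : V' → ℝ nonnegative with g_i > 0 exactly on U, U nonempty. Define h_g(U) = min over 0 ≤ t < max_i g_i of cut(C_t)/|C_t| where C_t = {i ∈ U : g_i > t}. Then for p ≥ 1, h_g(U)·Σ_i g_i^p ≤ Σ_{{i,j}∈E'} |g_i^p − g_j^p|. -/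
open Finset

variable {V : Type*}

/-!
Layer-cake / co-area argument. For `a, b ≥ 0`, integrating over `s > 0` the indicator of
`s < a` gives `a`, and integrating `|1[s < a] - 1[s < b]|` gives `|a - b|`. Hence `∑ x` and
`∑_{ij ∈ E} |x i - x j|` are the integrals over `s > 0` of the size and of the cut of the
superlevel set `{x > s}`, so a pointwise bound `h · |{x > s}| ≤ cut {x > s}` integrates to
`h · ∑ x ≤ ∑_{ij ∈ E} |x i - x j|`. For `x = g ^ p` the superlevel set at `s` is that of `g`
at `s ^ (1/p)`, where the bound with `h = h_g` holds by definition of `h_g`.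
-/

open MeasureTheory Set

lemma integrableOn_indicator_Iio_one (a : ℝ) :
    IntegrableOn ((Iio a).indicator (1 : ℝ → ℝ)) (Ioi 0) := by
  rw [IntegrableOn, integrable_indicator_iff measurableSet_Iio]
  refine integrableOn_const (ne_of_lt ?_)
  rw [Measure.restrict_apply measurableSet_Iio, Iio_inter_Ioi]
  exact measure_Ioo_lt_top

lemma setIntegral_Ioi_zero_indicator_Iio_one {a : ℝ} (ha : 0 ≤ a) :
    ∫ s in Ioi 0, (Iio a).indicator (1 : ℝ → ℝ) s = a := by
  rw [integral_indicator_one measurableSet_Iio, measureReal_def,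
    Measure.restrict_apply measurableSet_Iio, Iio_inter_Ioi, Real.volume_Ioo, sub_zero,
    ENNReal.toReal_ofReal ha]

lemma setIntegral_Ioi_zero_abs_sub_indicator_Iio_one_of_le {a b : ℝ} (ha : 0 ≤ a) (hab : a ≤ b) :
    ∫ s in Ioi 0, |(Iio a).indicator 1 s - (Iio b).indicator (1 : ℝ → ℝ) s| = b - a := by
  have hmono : (Iio a).indicator (1 : ℝ → ℝ) ≤ (Iio b).indicator 1 :=
    indicator_le_indicator_of_subset (Iio_subset_Iio hab) (fun _ => zero_le_one)
  simp_rw [abs_sub_comm _ ((Iio b).indicator 1 _), abs_of_nonneg (sub_nonneg.2 (hmono _))]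
  rw [integral_sub (integrableOn_indicator_Iio_one b) (integrableOn_indicator_Iio_one a),
    setIntegral_Ioi_zero_indicator_Iio_one (ha.trans hab), setIntegral_Ioi_zero_indicator_Iio_one ha]

lemma setIntegral_Ioi_zero_abs_sub_indicator_Iio_one {a b : ℝ} (ha : 0 ≤ a) (hb : 0 ≤ b) :
    ∫ s in Ioi 0, |(Iio a).indicator 1 s - (Iio b).indicator (1 : ℝ → ℝ) s| = |a - b| := by
  rcases le_total a b with hab | hba
  · rw [setIntegral_Ioi_zero_abs_sub_indicator_Iio_one_of_le ha hab, abs_sub_comm,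
      abs_of_nonneg (sub_nonneg.2 hab)]
  · simp_rw [abs_sub_comm ((Iio a).indicator 1 _)]
    rw [setIntegral_Ioi_zero_abs_sub_indicator_Iio_one_of_le hb hba,
      abs_of_nonneg (sub_nonneg.2 hba)]

section Graph

noncomputable def edgeVar (x : V → ℝ) : Sym2 V → ℝ :=
  Sym2.lift ⟨fun i j => |x i - x j|, fun _ _ => abs_sub_comm _ _⟩

lemma integrableOn_edgeVar_indicator (x : V → ℝ) (e : Sym2 V) :
    IntegrableOn (fun s => edgeVar (fun i => (Iio (x i)).indicator (1 : ℝ → ℝ) s) e) (Ioi 0) := by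
  induction e using Sym2.ind with
  | _ i j =>
    exact ((integrableOn_indicator_Iio_one (x i)).sub (integrableOn_indicator_Iio_one (x j))).abs

variable [Fintype V] {x : V → ℝ}

noncomputable def superlevel (x : V → ℝ) (s : ℝ) : Finset V := univ.filter fun i => s < x i

lemma superlevel_rpow (hx : ∀ i, 0 ≤ x i) {p s : ℝ} (hp : 0 < p) (hs : 0 ≤ s) :
    superlevel (fun i => x i ^ p) s = superlevel x (s ^ p⁻¹) := by
  ext i
  simp [superlevel, Real.rpow_inv_lt_iff_of_pos hs (hx i) hp]

variable [DecidableEq V]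

lemma cutN_eq_sum_edgeVar (G : SimpleGraph V) [Fintype G.edgeSet] (C : Finset V) :
    (cutN G C : ℝ) = ∑ e ∈ G.edgeFinset, edgeVar (fun i => if i ∈ C then (1 : ℝ) else 0) e := by
  rw [cutN, card_filter, Nat.cast_sum]
  refine sum_congr rfl fun e _ => ?_
  induction e using Sym2.ind with
  | _ i j => by_cases hi : i ∈ C <;> by_cases hj : j ∈ C <;> simp [edgeVar, hi, hj]

lemma indicator_Iio_one_eq_ite_mem_superlevel (x : V → ℝ) (s : ℝ) (i : V) :
    (Iio (x i)).indicator (1 : ℝ → ℝ) s = if i ∈ superlevel x s then 1 else 0 := by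
  simp [indicator_apply, superlevel]

lemma card_superlevel_eq_sum (x : V → ℝ) (s : ℝ) :
    (#(superlevel x s) : ℝ) = ∑ i, (Iio (x i)).indicator (1 : ℝ → ℝ) s := by
  simp only [indicator_Iio_one_eq_ite_mem_superlevel, sum_boole, filter_mem_eq_inter,
    Finset.univ_inter]

lemma cutN_superlevel_eq_sum (G : SimpleGraph V) [Fintype G.edgeSet] (x : V → ℝ) (s : ℝ) :
    (cutN G (superlevel x s) : ℝ) =
      ∑ e ∈ G.edgeFinset, edgeVar (fun i => (Iio (x i)).indicator (1 : ℝ → ℝ) s) e := by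
  simp_rw [cutN_eq_sum_edgeVar, indicator_Iio_one_eq_ite_mem_superlevel]

lemma setIntegral_Ioi_zero_card_superlevel (hx : ∀ i, 0 ≤ x i) :
    ∫ s in Ioi 0, (#(superlevel x s) : ℝ) = ∑ i, x i := by
  simp_rw [card_superlevel_eq_sum]
  rw [integral_finsetSum _ fun i _ => integrableOn_indicator_Iio_one (x i)]
  exact sum_congr rfl fun i _ => setIntegral_Ioi_zero_indicator_Iio_one (hx i)

lemma setIntegral_Ioi_zero_cutN_superlevel (G : SimpleGraph V) [Fintype G.edgeSet]
    (hx : ∀ i, 0 ≤ x i) :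
    ∫ s in Ioi 0, (cutN G (superlevel x s) : ℝ) = ∑ e ∈ G.edgeFinset, edgeVar x e := by
  simp_rw [cutN_superlevel_eq_sum]
  rw [integral_finsetSum _ fun e _ => integrableOn_edgeVar_indicator x e]
  refine sum_congr rfl fun e _ => ?_
  induction e using Sym2.ind with
  | _ i j => exact setIntegral_Ioi_zero_abs_sub_indicator_Iio_one (hx i) (hx j)

theorem mul_sum_le_sum_edgeVar_of_superlevel (G : SimpleGraph V) [Fintype G.edgeSet]
    (hx : ∀ i, 0 ≤ x i) {h : ℝ}
    (hcut : ∀ s > 0, h * #(superlevel x s) ≤ cutN G (superlevel x s)) :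
    h * ∑ i, x i ≤ ∑ e ∈ G.edgeFinset, edgeVar x e := by
  rw [← setIntegral_Ioi_zero_card_superlevel hx, ← setIntegral_Ioi_zero_cutN_superlevel G hx,
    ← integral_const_mul]
  refine setIntegral_mono_on ?_ ?_ measurableSet_Ioi hcut
  · simp_rw [card_superlevel_eq_sum]
    exact (integrable_finsetSum _ fun i _ => integrableOn_indicator_Iio_one (x i)).const_mul h
  · simp_rw [cutN_superlevel_eq_sum]
    exact integrable_finsetSum _ fun e _ => integrableOn_edgeVar_indicator x e

lemma hgC_mul_card_superlevel_le (G : SimpleGraph V) [Fintype G.edgeSet] (g : V → ℝ) {t : ℝ}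
    (ht : 0 ≤ t) : hgC G g * #(superlevel g t) ≤ cutN G (superlevel g t) := by
  obtain hempty | ⟨i, hi⟩ := (superlevel g t).eq_empty_or_nonempty
  · simp [hempty]
  have hcard : (0 : ℝ) < #(superlevel g t) := by exact_mod_cast card_pos.2 ⟨i, hi⟩
  rw [← le_div_iff₀ hcard]
  refine csInf_le ⟨0, ?_⟩ ⟨t, ht, ?_, rfl⟩
  · rintro r ⟨t, -, -, rfl⟩
    positivity
  · have hti : t < g i := (mem_filter.1 hi).2
    exact hti.trans_le (le_ciSup (Set.finite_range g).bddAbove i)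

end Graph

theorem stmt_5 [Fintype V] [DecidableEq V] (G : SimpleGraph V) [DecidableRel G.Adj]
    (U : Finset V) (g : V → ℝ)
    (hpos : ∀ i ∈ U, 0 < g i) (hzero : ∀ i ∉ U, g i = 0) (p : ℝ) (hp : 1 ≤ p) :
    hgC G g * ∑ i, g i ^ p ≤
      ∑ e ∈ G.edgeFinset,
        Sym2.lift ⟨fun i j => |g i ^ p - g j ^ p|, fun i j => by simp [abs_sub_comm]⟩ e := by
  have hg : ∀ i, 0 ≤ g i := fun i => by
    by_cases hi : i ∈ U
    · exact (hpos i hi).le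
    · exact (hzero i hi).ge
  refine mul_sum_le_sum_edgeVar_of_superlevel G (fun i => Real.rpow_nonneg (hg i) p) fun s hs => ?_
  rw [superlevel_rpow hg (zero_lt_one.trans_le hp) hs.le]
  exact hgC_mul_card_superlevel_le G g (Real.rpow_nonneg hs.le _)
end

section
/- For real p > 1 and 0 ≤ b < a, ((a^p − b^p)/(a − b))^{p/(p−1)} ≤ p^{p/(p−1)} · (a^p + b^p)/2. -/
open Finset

variable {V : Type*}

/-! Write `X = (a ^ p + b ^ p) / 2` and `m = X ^ (1 / p)`. Integrating Young's inequality
`p t ^ (p - 1) m ≤ (p - 1) t ^ p + m ^ p` over `[b, a]` and bounding `∫ t ^ p` by the trapezoid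
`(a - b) X` (Hermite–Hadamard, as `t ^ p` is convex) gives `m (a ^ p - b ^ p) ≤ p (a - b) m ^ p`,
i.e. `(a ^ p - b ^ p) / (a - b) ≤ p X ^ (1 / q)`; raising this to the power `q` is the claim. -/

open Set intervalIntegral MeasureTheory

theorem ConvexOn.add_map_reflect_le {f : ℝ → ℝ} {a b t : ℝ} (hf : ConvexOn ℝ (Icc b a) f)
    (ht : t ∈ Icc b a) : f t + f (a + b - t) ≤ f a + f b := by
  rcases eq_or_lt_of_le (ht.1.trans ht.2) with rfl | hba
  · obtain rfl : t = b := le_antisymm ht.2 ht.1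
    simp
  have hb : b ∈ Icc b a := left_mem_Icc.2 hba.le
  have ha : a ∈ Icc b a := right_mem_Icc.2 hba.le
  set θ := (a - t) / (a - b)
  have hθ₀ : 0 ≤ θ := div_nonneg (by linarith [ht.2]) (by linarith)
  have hθ₁ : 0 ≤ 1 - θ := by
    rw [sub_nonneg, div_le_one (by linarith)]; linarith [ht.1]
  have h₁ := hf.2 hb ha hθ₀ hθ₁ (by ring)
  have h₂ := hf.2 hb ha hθ₁ hθ₀ (by ring)
  have e₁ : θ • b + (1 - θ) • a = t := by simp only [θ, smul_eq_mul]; field_simp; ring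
  have e₂ : (1 - θ) • b + θ • a = a + b - t := by simp only [θ, smul_eq_mul]; field_simp; ring
  rw [e₁] at h₁
  rw [e₂] at h₂
  simp only [smul_eq_mul] at h₁ h₂
  linarith

theorem ConvexOn.intervalIntegral_le_trapezoid {f : ℝ → ℝ} {a b : ℝ} (hab : b ≤ a)
    (hf : ConvexOn ℝ (Icc b a) f) (hint : IntervalIntegrable f volume b a) :
    ∫ t in b..a, f t ≤ (a - b) * ((f a + f b) / 2) := by
  have hreflect : ∫ t in b..a, f (a + b - t) = ∫ t in b..a, f t := by
    rw [integral_comp_sub_left]; congr 1 <;> ring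
  have hint' : IntervalIntegrable (fun t ↦ f (a + b - t)) volume b a := by
    simpa using (hint.comp_sub_left (a + b)).symm
  have hsum := integral_mono_on hab (hint.add hint') intervalIntegrable_const
    fun t ht ↦ hf.add_map_reflect_le ht
  rw [integral_add hint hint', hreflect, intervalIntegral.integral_const, smul_eq_mul] at hsum
  linarith

namespace Real

theorem mul_rpow_sub_one_mul_le {p t m : ℝ} (hp : 1 < p) (ht : 0 ≤ t) (hm : 0 ≤ m) :
    p * t ^ (p - 1) * m ≤ (p - 1) * t ^ p + m ^ p := by
  have hpq := (HolderConjugate.conjExponent hp).symm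
  have h := young_inequality_of_nonneg (rpow_nonneg ht (p - 1)) hm hpq
  have hp₀ : p - 1 ≠ 0 := by linarith
  rw [conjExponent, ← rpow_mul ht, mul_div_cancel₀ _ hp₀] at h
  calc p * t ^ (p - 1) * m = p * (t ^ (p - 1) * m) := mul_assoc _ _ _
    _ ≤ p * (t ^ p / (p / (p - 1)) + m ^ p / p) := by gcongr
    _ = (p - 1) * t ^ p + m ^ p := by field_simp

theorem mul_rpow_sub_rpow_le {p a b m : ℝ} (hp : 1 < p) (hb : 0 ≤ b) (hab : b ≤ a)
    (hm : 0 ≤ m) :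
    m * (a ^ p - b ^ p) ≤ (a - b) * ((p - 1) * ((a ^ p + b ^ p) / 2) + m ^ p) := by
  have hpow : IntervalIntegrable (fun t : ℝ ↦ t ^ p) volume b a :=
    intervalIntegrable_rpow (Or.inl (by linarith))
  have hftc : ∫ t in b..a, p * t ^ (p - 1) * m = m * (a ^ p - b ^ p) := by
    rw [intervalIntegral.integral_mul_const, intervalIntegral.integral_const_mul,
      integral_rpow (Or.inl (by linarith)), sub_add_cancel]
    field_simp
  have hyoung := integral_mono_on hab
    (((intervalIntegrable_rpow (Or.inl (by linarith))).const_mul p).mul_const m)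
    ((hpow.const_mul (p - 1)).add intervalIntegrable_const)
    fun t ht ↦ mul_rpow_sub_one_mul_le hp (hb.trans ht.1) hm
  have hconvex : ConvexOn ℝ (Icc b a) (fun t : ℝ ↦ t ^ p) :=
    (convexOn_rpow hp.le).subset (Icc_subset_Ici_self.trans (Ici_subset_Ici.2 hb)) (convex_Icc b a)
  have hhadamard := hconvex.intervalIntegral_le_trapezoid hab hpow
  rw [hftc, integral_add (hpow.const_mul _) intervalIntegrable_const,
    intervalIntegral.integral_const_mul, intervalIntegral.integral_const, smul_eq_mul] at hyoung
  have hp₁ : 0 ≤ p - 1 := by linarith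
  calc m * (a ^ p - b ^ p) ≤ (p - 1) * (∫ t in b..a, t ^ p) + (a - b) * m ^ p := hyoung
    _ ≤ (p - 1) * ((a - b) * ((a ^ p + b ^ p) / 2)) + (a - b) * m ^ p := by gcongr
    _ = (a - b) * ((p - 1) * ((a ^ p + b ^ p) / 2) + m ^ p) := by ring

theorem rpow_sub_rpow_div_sub_le {p a b : ℝ} (hp : 1 < p) (hb : 0 ≤ b) (hab : b < a) :
    (a ^ p - b ^ p) / (a - b) ≤ p * ((a ^ p + b ^ p) / 2) ^ ((p - 1) / p) := by
  set X := (a ^ p + b ^ p) / 2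
  have hX : 0 < X := by
    have := rpow_pos_of_pos (hb.trans_lt hab) p
    have := rpow_nonneg hb p
    positivity
  have hp₀ : p ≠ 0 := by linarith
  set m := X ^ p⁻¹
  have hm : 0 < m := rpow_pos_of_pos hX _
  have hmp : m ^ p = X := rpow_inv_rpow hX.le hp₀
  have hmX : m ^ (p - 1) = X ^ ((p - 1) / p) := by
    rw [← rpow_mul hX.le, inv_mul_eq_div]
  have h := mul_rpow_sub_rpow_le hp hb hab.le hm.le
  rw [div_le_iff₀ (sub_pos.2 hab), ← hmX, rpow_sub_one hm.ne', hmp]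
  rw [hmp, ← le_div_iff₀' hm] at h
  calc a ^ p - b ^ p ≤ (a - b) * ((p - 1) * X + X) / m := h
    _ = p * (X / m) * (a - b) := by ring

end Real

theorem stmt_7 (p a b : ℝ) (hp : 1 < p) (hb : 0 ≤ b) (hab : b < a) :
    ((a ^ p - b ^ p) / (a - b)) ^ (p / (p - 1)) ≤
      p ^ (p / (p - 1)) * ((a ^ p + b ^ p) / 2) := by
  have hp₁ : 0 < p - 1 := sub_pos.2 hp
  have hX : 0 ≤ (a ^ p + b ^ p) / 2 := by
    have := Real.rpow_nonneg hb p
    have := Real.rpow_nonneg (hb.trans hab.le) p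
    positivity
  have hquot : 0 ≤ (a ^ p - b ^ p) / (a - b) :=
    div_nonneg (sub_nonneg.2 (Real.rpow_le_rpow hb hab.le (by linarith))) (sub_nonneg.2 hab.le)
  calc ((a ^ p - b ^ p) / (a - b)) ^ (p / (p - 1))
      ≤ (p * ((a ^ p + b ^ p) / 2) ^ ((p - 1) / p)) ^ (p / (p - 1)) := by
        gcongr
        exact Real.rpow_sub_rpow_div_sub_le hp hb hab
    _ = p ^ (p / (p - 1)) * ((a ^ p + b ^ p) / 2) := by
        rw [Real.mul_rpow (by linarith) (Real.rpow_nonneg hX _), ← Real.rpow_mul hX,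
          show (p - 1) / p * (p / (p - 1)) = 1 by field_simp, Real.rpow_one]
end

section
/- (Perron–Frobenius property) For p > 1 and G connected, any eigenvector x on the unit p-sphere attaining λ_p(G) = max Q_p has all components strictly positive or all strictly negative. -/
/-! Since `|x_i + x_j| ≤ |x_i| + |x_j|`, the vector `|x|` is again a maximiser, and the equality
`Q_p(x) = Q_p(|x|)` forces `x_i` and `x_j` to have the same sign on every edge. A nonnegative
maximiser `y` has no zero entry: if `y_i > 0 = y_k` on an edge, raising `y_k` to `ε` increases
`Q_p` by at least `p y_i^(p-1) ε` but `Σ |y_j|^p` only by `ε^p`, which for small `ε` contradicts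
`Q_p(z) ≤ λ_p Σ |z_j|^p` because `p > 1`. Connectivity spreads both facts to all vertices. -/

open Finset

variable {V : Type*}

theorem SimpleGraph.Preconnected.forall_of_adj_imp {G : SimpleGraph V} (hG : G.Preconnected)
    {P : V → Prop} (hP : ∀ a b, G.Adj a b → P a → P b) {a : V} (ha : P a) (b : V) : P b := by
  by_contra hb
  obtain ⟨w⟩ := hG a b
  obtain ⟨d, -, hd, hd'⟩ := w.exists_boundary_dart {v | P v} ha hb
  exact hd' (hP _ _ d.adj hd)

theorem Real.rpow_add_mul_rpow_sub_one_le {a ε p : ℝ} (ha : 0 < a) (hε : -a ≤ ε) (hp : 1 ≤ p) :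
    a ^ p + p * a ^ (p - 1) * ε ≤ (a + ε) ^ p := by
  have hs : -1 ≤ ε / a := by rwa [le_div_iff₀ ha, neg_one_mul]
  calc a ^ p + p * a ^ (p - 1) * ε = a ^ p * (1 + p * (ε / a)) := by
        rw [Real.rpow_sub_one ha.ne']; field_simp
    _ ≤ a ^ p * (1 + ε / a) ^ p := by gcongr; exact one_add_mul_self_le_rpow_one_add hs hp
    _ = (a + ε) ^ p := by
        rw [← Real.mul_rpow ha.le (by linarith)]
        congr 1; field_simp

theorem exists_pos_mul_rpow_lt {c l q : ℝ} (hc : 0 < c) (hq : 0 < q) :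
    ∃ ε > 0, l * ε ^ q < c := by
  have h : Filter.Tendsto (fun ε : ℝ => l * ε ^ q) (nhdsWithin 0 (Set.Ioi 0)) (nhds 0) := by
    have := ((Real.continuousAt_rpow_const 0 q (Or.inr hq.le)).tendsto.const_mul l).mono_left
      (nhdsWithin_le_nhds (s := Set.Ioi 0))
    simpa [Real.zero_rpow hq.ne'] using this
  obtain ⟨ε, hε, hεpos⟩ := ((h.eventually (gt_mem_nhds hc)).and self_mem_nhdsWithin).exists
  exact ⟨ε, hεpos, hε⟩

section Qp

variable [Fintype V] (G : SimpleGraph V) [Fintype G.edgeSet] {p : ℝ}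

theorem Qp_le_Qp {x y : V → ℝ} (hp : 0 ≤ p)
    (h : ∀ a b, G.Adj a b → |x a + x b| ≤ |y a + y b|) : Qp G p x ≤ Qp G p y :=
  Finset.sum_le_sum fun e he => by
    induction e using Sym2.ind with
    | _ a b => exact Real.rpow_le_rpow (abs_nonneg _) (h a b (G.mem_edgeFinset.mp he)) hp

theorem Qp_const_mul {t : ℝ} (ht : 0 ≤ t) (x : V → ℝ) :
    Qp G p (fun i => t * x i) = t ^ p * Qp G p x := by
  rw [Qp, Qp, Finset.mul_sum]
  refine Finset.sum_congr rfl fun e _ => ?_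
  induction e using Sym2.ind with
  | _ a b =>
    simp only [Sym2.lift_mk, ← mul_add, abs_mul, abs_of_nonneg ht,
      Real.mul_rpow ht (abs_nonneg _)]

theorem bddAbove_Qp_unitSphere (hp : 0 < p) :
    BddAbove {r | ∃ x : V → ℝ, unitSphere p x ∧ Qp G p x = r} := by
  refine ⟨Qp G p fun _ => 1, ?_⟩
  rintro r ⟨x, hx, rfl⟩
  have hle : ∀ i, |x i| ≤ 1 := fun i => by
    rw [← Real.rpow_le_rpow_iff (abs_nonneg _) zero_le_one hp, Real.one_rpow, ← hx]
    exact Finset.single_le_sum (fun j _ => Real.rpow_nonneg (abs_nonneg (x j)) p)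
      (Finset.mem_univ i)
  refine Qp_le_Qp G hp.le fun a b _ => ?_
  calc |x a + x b| ≤ |x a| + |x b| := abs_add_le _ _
    _ ≤ 1 + 1 := add_le_add (hle a) (hle b)
    _ = |1 + 1| := by norm_num

theorem Qp_le_lamp (hp : 0 < p) {x : V → ℝ} (hx : unitSphere p x) : Qp G p x ≤ lamp G p :=
  le_csSup (bddAbove_Qp_unitSphere G hp) ⟨x, hx, rfl⟩

theorem Qp_le_lamp_mul (hp : 0 < p) {x : V → ℝ} (hx : 0 < ∑ i, |x i| ^ p) :
    Qp G p x ≤ lamp G p * ∑ i, |x i| ^ p := by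
  set s := ∑ i, |x i| ^ p
  set t := s ^ (-p⁻¹)
  have ht : 0 ≤ t := Real.rpow_nonneg hx.le _
  have htp : t ^ p = s⁻¹ := by
    rw [← Real.rpow_mul hx.le, neg_mul, inv_mul_cancel₀ hp.ne', Real.rpow_neg_one]
  have hsphere : unitSphere p fun i => t * x i := by
    simp only [unitSphere, abs_mul, abs_of_nonneg ht, Real.mul_rpow ht (abs_nonneg _),
      ← Finset.mul_sum, htp]
    exact inv_mul_cancel₀ hx.ne'
  have := Qp_le_lamp G hp hsphere
  rw [Qp_const_mul G ht, htp, inv_mul_le_iff₀ hx] at this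
  linarith

theorem rpow_sub_rpow_le_Qp_sub_Qp (hp : 0 ≤ p) {y z : V → ℝ}
    (h : ∀ a b, G.Adj a b → |y a + y b| ≤ |z a + z b|) {i k : V} (hik : G.Adj i k) :
    |z i + z k| ^ p - |y i + y k| ^ p ≤ Qp G p z - Qp G p y := by
  rw [Qp, Qp, ← Finset.sum_sub_distrib]
  refine le_of_eq_of_le ?_
    (Finset.single_le_sum (fun e he => ?_) (G.mem_edgeFinset.mpr (G.mem_edgeSet.mpr hik)))
  · rfl
  induction e using Sym2.ind with
  | _ a b =>
    exact sub_nonneg.mpr (Real.rpow_le_rpow (abs_nonneg _) (h a b (G.mem_edgeFinset.mp he)) hp)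

theorem abs_add_eq_of_Qp_abs_le (hp : 0 < p) {x : V → ℝ}
    (h : Qp G p (fun i => |x i|) ≤ Qp G p x) {a b : V} (hab : G.Adj a b) :
    |x a + x b| = |x a| + |x b| := by
  have hedge := rpow_sub_rpow_le_Qp_sub_Qp G hp.le (y := x) (z := fun i => |x i|)
    (fun a b _ => (abs_add_le (x a) (x b)).trans (le_abs_self _)) hab
  simp only [abs_of_nonneg (add_nonneg (abs_nonneg (x a)) (abs_nonneg (x b)))] at hedge
  refine le_antisymm (abs_add_le _ _) ?_
  rw [← Real.rpow_le_rpow_iff (by positivity) (abs_nonneg _) hp]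
  linarith

open Classical in
theorem pos_of_adj_of_Qp_eq_lamp (hp : 1 < p) {y : V → ℝ} (hy : ∀ j, 0 ≤ y j)
    (hys : unitSphere p y) (hQ : Qp G p y = lamp G p) {i k : V} (hik : G.Adj i k)
    (hi : 0 < y i) : 0 < y k := by
  have hp0 : 0 < p := by linarith
  by_contra! hk
  replace hk : y k = 0 := le_antisymm hk (hy k)
  obtain ⟨ε, hε, hsmall⟩ := exists_pos_mul_rpow_lt (l := lamp G p)
    (mul_pos hp0 (Real.rpow_pos_of_pos hi (p - 1))) (sub_pos.mpr hp)
  set z := y + Pi.single k ε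
  have hyz : ∀ j, y j ≤ z j :=
    le_add_of_nonneg_right (Pi.single_nonneg.mpr hε.le : 0 ≤ (Pi.single k ε : V → ℝ))
  have hyz_edge : ∀ a b, G.Adj a b → |y a + y b| ≤ |z a + z b| := fun a b _ =>
    abs_le_abs_of_nonneg (add_nonneg (hy a) (hy b)) (add_le_add (hyz a) (hyz b))
  have hzk : z k = ε := by simp [z, hk]
  have hzi : z i = y i := by simp [z, hik.ne]
  have hlower : lamp G p + p * y i ^ (p - 1) * ε ≤ Qp G p z := by
    have := rpow_sub_rpow_le_Qp_sub_Qp G hp0.le hyz_edge hik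
    rw [hzi, hzk, hk, add_zero, abs_of_pos hi, abs_of_pos (by linarith)] at this
    linarith [Real.rpow_add_mul_rpow_sub_one_le (ε := ε) hi (by linarith) hp.le]
  have hnorm : ∑ j, |z j| ^ p = 1 + ε ^ p := by
    have hterm : ∀ j, |z j| ^ p = |y j| ^ p + (Pi.single k (ε ^ p) : V → ℝ) j := fun j => by
      by_cases hj : j = k
      · subst hj; simp [hzk, hk, Real.zero_rpow hp0.ne', abs_of_pos hε]
      · simp [z, hj]
    rw [Finset.sum_congr rfl fun j _ => hterm j, Finset.sum_add_distrib, hys,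
      Finset.sum_pi_single', if_pos (Finset.mem_univ k)]
  have hupper := Qp_le_lamp_mul G hp0 (x := z) (by rw [hnorm]; positivity)
  rw [hnorm] at hupper
  have : p * y i ^ (p - 1) * ε ≤ lamp G p * ε ^ (p - 1) * ε := by
    rw [mul_assoc (lamp G p), ← Real.rpow_add_one hε.ne', sub_add_cancel]
    linarith
  exact absurd (le_of_mul_le_mul_right this hε) (not_le.mpr hsmall)

end Qp

theorem stmt_12_general [Fintype V] (G : SimpleGraph V) [DecidableRel G.Adj]
    (hc : G.Connected) (p : ℝ) (hp : 1 < p) (x : V → ℝ)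
    (hx : unitSphere p x) (hmax : Qp G p x = lamp G p) :
    (∀ i, 0 < x i) ∨ (∀ i, x i < 0) := by
  have hp0 : 0 < p := by linarith
  have habs_sphere : unitSphere p fun i => |x i| := by simpa [unitSphere] using hx
  have habs_le : Qp G p (fun i => |x i|) ≤ Qp G p x := by
    rw [hmax]; exact Qp_le_lamp G hp0 habs_sphere
  have habs_max : Qp G p (fun i => |x i|) = lamp G p :=
    le_antisymm (Qp_le_lamp G hp0 habs_sphere) <| hmax ▸
      Qp_le_Qp G hp0.le fun a b _ => (abs_add_le (x a) (x b)).trans (le_abs_self _)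
  obtain ⟨m, hm⟩ : ∃ m, x m ≠ 0 := by
    by_contra! h
    simp [unitSphere, h, Real.zero_rpow hp0.ne'] at hx
  have hne : ∀ j, x j ≠ 0 := fun j => abs_pos.mp <|
    hc.preconnected.forall_of_adj_imp (P := fun j => 0 < |x j|)
      (fun a b hab => pos_of_adj_of_Qp_eq_lamp G hp (fun j => abs_nonneg (x j)) habs_sphere
        habs_max hab) (abs_pos.mpr hm) j
  have hsign : ∀ a b, G.Adj a b → (0 < x a ↔ 0 < x b) := fun a b hab => by
    rcases (abs_add_eq_add_abs_iff _ _).mp (abs_add_eq_of_Qp_abs_le G hp0 habs_le hab) with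
      h | h <;> grind
  rcases (hne m).lt_or_gt with hneg | hpos
  · refine Or.inr fun j => (not_lt.mp ?_).lt_of_ne (hne j)
    exact hc.preconnected.forall_of_adj_imp (P := fun j => ¬0 < x j)
      (fun a b hab => mt (hsign a b hab).mpr) (not_lt.mpr hneg.le) j
  · exact Or.inl (hc.preconnected.forall_of_adj_imp (fun a b hab => (hsign a b hab).mp) hpos)

theorem stmt_12 [Fintype V] [DecidableEq V] (G : SimpleGraph V) [DecidableRel G.Adj]
    (hc : G.Connected) (p : ℝ) (hp : 1 < p) (x : V → ℝ)
    (hx : unitSphere p x) (hmax : Qp G p x = lamp G p) :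
    (∀ i, 0 < x i) ∨ (∀ i, x i < 0) :=
  stmt_12_general G hc p hp x hx hmax
end

section
/- For p > 1 with Hölder conjugate q = p/(p−1), and G connected with at least one edge: λ_p(G) ≤ 2^{p-1}·max_{{i,j}∈E} ((d_i^q + d_j^q)/2)^{1/q}, with equality if and only if G is regular. -/
open Finset

variable {V : Type*}

/-!
On an edge `ij` put `w_i = d_i ^ (1/(p-1))`. Radon's inequality (convexity of `t ↦ t ^ p`) gives
`|x_i + x_j| ^ p ≤ (w_i + w_j) ^ (p-1) * (|x_i| ^ p / d_i + |x_j| ^ p / d_j)`, and the power mean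
inequality bounds `(w_i + w_j) ^ (p-1)` by `2 ^ (p-1) * ((d_i ^ q + d_j ^ q) / 2) ^ (1/q)`. Summing
over the edges, vertex `i` collects `d_i` shares `|x_i| ^ p / d_i`, i.e. exactly `|x_i| ^ p`.

For equality take a maximiser `x` (the unit sphere is compact). If `G` is irregular, some edge is
strict: if `x` vanishes somewhere, an edge from a nonzero to a zero entry makes Radon strict;
otherwise an edge joining two different degrees makes the power mean strict. For a `d`-regular
graph the constant vector attains the bound.
-/

section Scalar

variable {p : ℝ}

theorem mul_div_rpow_eq {a u : ℝ} (ha : 0 ≤ a) (hu : 0 < u) :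
    u * (a / u) ^ p = a ^ p / u ^ (p - 1) := by
  rw [Real.div_rpow ha hu.le, Real.rpow_sub_one hu.ne']
  field_simp

theorem add_mul_rpow_weighted_eq {a b u v : ℝ} (ha : 0 ≤ a) (hb : 0 ≤ b) (hu : 0 < u)
    (hv : 0 < v) :
    (u + v) * ((u / (u + v)) • (a / u) + (v / (u + v)) • (b / v)) ^ p
      = (a + b) ^ p / (u + v) ^ (p - 1) := by
  have huv : 0 < u + v := add_pos hu hv
  rw [← mul_div_rpow_eq (add_nonneg ha hb) huv, smul_eq_mul, smul_eq_mul]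
  congr 2
  field_simp

theorem add_mul_weighted_rpow_eq {a b u v : ℝ} (ha : 0 ≤ a) (hb : 0 ≤ b) (hu : 0 < u)
    (hv : 0 < v) :
    (u + v) * ((u / (u + v)) • (a / u) ^ p + (v / (u + v)) • (b / v) ^ p)
      = a ^ p / u ^ (p - 1) + b ^ p / v ^ (p - 1) := by
  rw [← mul_div_rpow_eq ha hu, ← mul_div_rpow_eq hb hv, smul_eq_mul,
    smul_eq_mul]
  field_simp

/-- Radon's inequality for two terms. -/
theorem add_rpow_div_le (hp : 1 ≤ p) {a b u v : ℝ} (ha : 0 ≤ a) (hb : 0 ≤ b)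
    (hu : 0 < u) (hv : 0 < v) :
    (a + b) ^ p / (u + v) ^ (p - 1) ≤ a ^ p / u ^ (p - 1) + b ^ p / v ^ (p - 1) := by
  have huv : 0 < u + v := add_pos hu hv
  have h := (convexOn_rpow hp).2 (div_nonneg ha hu.le : a / u ∈ Set.Ici 0)
    (div_nonneg hb hv.le : b / v ∈ Set.Ici 0) (div_pos hu huv).le (div_pos hv huv).le
    (by field_simp)
  rw [← add_mul_rpow_weighted_eq ha hb hu hv, ← add_mul_weighted_rpow_eq ha hb hu hv]
  exact mul_le_mul_of_nonneg_left h huv.le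

theorem add_rpow_div_lt (hp : 1 < p) {a b u v : ℝ} (ha : 0 ≤ a) (hb : 0 ≤ b)
    (hu : 0 < u) (hv : 0 < v) (hab : a / u ≠ b / v) :
    (a + b) ^ p / (u + v) ^ (p - 1) < a ^ p / u ^ (p - 1) + b ^ p / v ^ (p - 1) := by
  have huv : 0 < u + v := add_pos hu hv
  have h := (strictConvexOn_rpow hp).2 (div_nonneg ha hu.le : a / u ∈ Set.Ici 0)
    (div_nonneg hb hv.le : b / v ∈ Set.Ici 0) hab (div_pos hu huv) (div_pos hv huv)
    (by field_simp)
  rw [← add_mul_rpow_weighted_eq ha hb hu hv, ← add_mul_weighted_rpow_eq ha hb hu hv]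
  exact mul_lt_mul_of_pos_left h huv

theorem add_div_two_rpow_le (hp : 1 ≤ p) {u v : ℝ} (hu : 0 ≤ u) (hv : 0 ≤ v) :
    ((u + v) / 2) ^ p ≤ (u ^ p + v ^ p) / 2 := by
  have h := (convexOn_rpow hp).2 (hu : u ∈ Set.Ici 0) (hv : v ∈ Set.Ici 0)
    (by norm_num : (0 : ℝ) ≤ 1 / 2) (by norm_num : (0 : ℝ) ≤ 1 / 2) (by norm_num)
  simp only [smul_eq_mul] at h
  rwa [show (u + v) / 2 = 1 / 2 * u + 1 / 2 * v by ring,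
    show (u ^ p + v ^ p) / 2 = 1 / 2 * u ^ p + 1 / 2 * v ^ p by ring]

theorem add_div_two_rpow_lt (hp : 1 < p) {u v : ℝ} (hu : 0 ≤ u) (hv : 0 ≤ v) (huv : u ≠ v) :
    ((u + v) / 2) ^ p < (u ^ p + v ^ p) / 2 := by
  have h := (strictConvexOn_rpow hp).2 (hu : u ∈ Set.Ici 0) (hv : v ∈ Set.Ici 0) huv
    (by norm_num : (0 : ℝ) < 1 / 2) (by norm_num : (0 : ℝ) < 1 / 2) (by norm_num)
  simp only [smul_eq_mul] at h
  rwa [show (u + v) / 2 = 1 / 2 * u + 1 / 2 * v by ring,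
    show (u ^ p + v ^ p) / 2 = 1 / 2 * u ^ p + 1 / 2 * v ^ p by ring]

theorem add_rpow_sub_one_eq (hp : 0 < p) {u v : ℝ} (hu : 0 ≤ u) (hv : 0 ≤ v) :
    (u + v) ^ (p - 1) = 2 ^ (p - 1) * (((u + v) / 2) ^ p) ^ ((p - 1) / p) := by
  rw [← Real.rpow_mul (by positivity), mul_div_cancel₀ _ hp.ne', ← Real.mul_rpow zero_le_two
    (by positivity), mul_div_cancel₀ _ two_ne_zero]

theorem add_rpow_sub_one_le (hp : 1 < p) {u v : ℝ} (hu : 0 ≤ u) (hv : 0 ≤ v) :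
    (u + v) ^ (p - 1) ≤ 2 ^ (p - 1) * ((u ^ p + v ^ p) / 2) ^ ((p - 1) / p) := by
  have hp0 : 0 < p := by linarith
  have hq : 0 ≤ (p - 1) / p := div_nonneg (by linarith) hp0.le
  rw [add_rpow_sub_one_eq hp0 hu hv]
  gcongr
  exact add_div_two_rpow_le hp.le hu hv

theorem add_rpow_sub_one_lt (hp : 1 < p) {u v : ℝ} (hu : 0 ≤ u) (hv : 0 ≤ v) (huv : u ≠ v) :
    (u + v) ^ (p - 1) < 2 ^ (p - 1) * ((u ^ p + v ^ p) / 2) ^ ((p - 1) / p) := by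
  have hp0 : 0 < p := by linarith
  have hq : 0 < (p - 1) / p := div_pos (by linarith) hp0
  rw [add_rpow_sub_one_eq hp0 hu hv]
  gcongr
  exact add_div_two_rpow_lt hp hu hv huv

theorem exists_rpow_sub_one_eq (hp : 1 < p) {c : ℝ} (hc : 0 < c) :
    ∃ u, 0 < u ∧ u ^ (p - 1) = c :=
  ⟨c ^ (p - 1)⁻¹, Real.rpow_pos_of_pos hc _, Real.rpow_inv_rpow hc.le (sub_pos.2 hp).ne'⟩

theorem rpow_sub_one_rpow_div (hp : 1 < p) {u : ℝ} (hu : 0 ≤ u) :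
    (u ^ (p - 1)) ^ (p / (p - 1)) = u ^ p := by
  rw [← Real.rpow_mul hu, mul_div_cancel₀ _ (sub_pos.2 hp).ne']

theorem add_rpow_le_two_rpow_mul (hp : 1 < p) {a b c d : ℝ} (ha : 0 ≤ a) (hb : 0 ≤ b)
    (hc : 0 < c) (hd : 0 < d) :
    (a + b) ^ p ≤ 2 ^ (p - 1) * ((c ^ (p / (p - 1)) + d ^ (p / (p - 1))) / 2) ^ ((p - 1) / p)
      * (a ^ p / c + b ^ p / d) := by
  obtain ⟨u, hu, rfl⟩ := exists_rpow_sub_one_eq hp hc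
  obtain ⟨v, hv, rfl⟩ := exists_rpow_sub_one_eq hp hd
  rw [rpow_sub_one_rpow_div hp hu.le, rpow_sub_one_rpow_div hp hv.le]
  calc (a + b) ^ p ≤ (u + v) ^ (p - 1) * (a ^ p / u ^ (p - 1) + b ^ p / v ^ (p - 1)) :=
        (div_le_iff₀' (by positivity)).1 (add_rpow_div_le hp.le ha hb hu hv)
    _ ≤ _ := by
        gcongr
        exact add_rpow_sub_one_le hp hu.le hv.le

theorem add_rpow_lt_two_rpow_mul (hp : 1 < p) {a b c d : ℝ} (ha : 0 < a) (hb : 0 ≤ b)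
    (hc : 0 < c) (hd : 0 < d) (hcd : c ≠ d ∨ b = 0) :
    (a + b) ^ p < 2 ^ (p - 1) * ((c ^ (p / (p - 1)) + d ^ (p / (p - 1))) / 2) ^ ((p - 1) / p)
      * (a ^ p / c + b ^ p / d) := by
  obtain ⟨u, hu, rfl⟩ := exists_rpow_sub_one_eq hp hc
  obtain ⟨v, hv, rfl⟩ := exists_rpow_sub_one_eq hp hd
  rw [rpow_sub_one_rpow_div hp hu.le, rpow_sub_one_rpow_div hp hv.le]
  have hX : 0 < a ^ p / u ^ (p - 1) + b ^ p / v ^ (p - 1) := by positivity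
  rcases hcd with hcd | rfl
  · calc (a + b) ^ p ≤ (u + v) ^ (p - 1) * (a ^ p / u ^ (p - 1) + b ^ p / v ^ (p - 1)) :=
          (div_le_iff₀' (by positivity)).1 (add_rpow_div_le hp.le ha.le hb hu hv)
      _ < _ := by
          gcongr
          exact add_rpow_sub_one_lt hp hu.le hv.le (ne_of_apply_ne (· ^ (p - 1)) hcd)
  · calc (a + 0) ^ p < (u + v) ^ (p - 1) * (a ^ p / u ^ (p - 1) + 0 ^ p / v ^ (p - 1)) :=
          (div_lt_iff₀' (by positivity)).1
            (add_rpow_div_lt hp ha.le le_rfl hu hv (by rw [zero_div]; positivity))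
      _ ≤ _ := by
          gcongr
          exact add_rpow_sub_one_le hp hu.le hv.le

theorem abs_add_rpow_le_two_rpow_mul (hp : 1 < p) {a b c d M : ℝ} (hc : 0 < c) (hd : 0 < d)
    (hM : ((c ^ (p / (p - 1)) + d ^ (p / (p - 1))) / 2) ^ ((p - 1) / p) ≤ M) :
    |a + b| ^ p ≤ 2 ^ (p - 1) * M * (|a| ^ p / c) + 2 ^ (p - 1) * M * (|b| ^ p / d) := by
  rw [← mul_add]
  calc |a + b| ^ p ≤ (|a| + |b|) ^ p := by gcongr; exact abs_add_le _ _
    _ ≤ _ := add_rpow_le_two_rpow_mul hp (abs_nonneg _) (abs_nonneg _) hc hd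
    _ ≤ _ := by gcongr

theorem abs_add_rpow_lt_two_rpow_mul (hp : 1 < p) {a b c d M : ℝ} (ha : a ≠ 0) (hc : 0 < c)
    (hd : 0 < d) (hcd : c ≠ d ∨ b = 0)
    (hM : ((c ^ (p / (p - 1)) + d ^ (p / (p - 1))) / 2) ^ ((p - 1) / p) ≤ M) :
    |a + b| ^ p < 2 ^ (p - 1) * M * (|a| ^ p / c) + 2 ^ (p - 1) * M * (|b| ^ p / d) := by
  rw [← mul_add]
  calc |a + b| ^ p ≤ (|a| + |b|) ^ p := by gcongr; exact abs_add_le _ _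
    _ < _ := add_rpow_lt_two_rpow_mul hp (abs_pos.2 ha) (abs_nonneg _) hc hd
        (hcd.imp_right abs_eq_zero.2)
    _ ≤ _ := by gcongr

theorem mean_rpow_self (hp : 1 < p) {c : ℝ} (hc : 0 ≤ c) :
    ((c ^ (p / (p - 1)) + c ^ (p / (p - 1))) / 2) ^ ((p - 1) / p) = c := by
  have hp1 : p - 1 ≠ 0 := (sub_pos.2 hp).ne'
  rw [add_self_div_two, ← Real.rpow_mul hc, div_mul_div_cancel₀ hp1, div_self (by positivity),
    Real.rpow_one]

end Scalar

namespace SimpleGraph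

variable [Fintype V] (G : SimpleGraph V) [DecidableRel G.Adj]

theorem sum_edgeFinset_sym2_lift_add {M : Type*} [AddCommMonoid M] (g : V → M) :
    ∑ e ∈ G.edgeFinset, Sym2.lift ⟨fun i j => g i + g j, fun _ _ => add_comm _ _⟩ e
      = ∑ v, G.degree v • g v := by
  classical
  calc _ = ∑ d : G.Dart, g d.fst := by
        rw [← sum_fiberwise_of_maps_to (g := Dart.edge) (t := G.edgeFinset)
          fun d _ => G.mem_edgeFinset.2 d.edge_mem]
        refine sum_congr rfl fun e he => ?_
        induction e using Sym2.ind with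
        | h i j =>
          let d : G.Dart := ⟨(i, j), G.mem_edgeFinset.1 he⟩
          rw [show univ.filter (fun d' : G.Dart => d'.edge = s(i, j)) = {d, d.symm} from
            d.edge_fiber, sum_pair d.symm_ne.symm]
          rfl
    _ = ∑ v, G.degree v • g v := by
        rw [← sum_fiberwise_of_maps_to (g := fun d : G.Dart => d.fst) (t := univ)
          fun d _ => mem_univ _]
        refine sum_congr rfl fun v _ => ?_
        rw [sum_congr rfl fun d hd => congrArg g (mem_filter.1 hd).2, sum_const]
        congr 1
        convert G.dart_fst_fiber_card_eq_degree v

theorem forall_mem_edgeFinset_lift {α β : Type*} {r : α → β → Prop} {f : V → V → α}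
    {g : V → V → β} (hf : ∀ a b, f a b = f b a) (hg : ∀ a b, g a b = g b a)
    (h : ∀ i j, G.Adj i j → r (f i j) (g i j)) :
    ∀ e ∈ G.edgeFinset, r (Sym2.lift ⟨f, hf⟩ e) (Sym2.lift ⟨g, hg⟩ e) := by
  intro e he
  induction e using Sym2.ind with
  | h i j => exact h i j (G.mem_edgeFinset.1 he)

end SimpleGraph

namespace SimpleGraph.Preconnected

variable {G : SimpleGraph V}

theorem exists_adj_ne {β : Type*} (hG : G.Preconnected) {f : V → β} {u v : V}
    (huv : f u ≠ f v) : ∃ i j, G.Adj i j ∧ f i ≠ f j := by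
  obtain ⟨d, -, hd₁, hd₂⟩ := (hG u v).some.exists_boundary_dart {w | f w = f u} rfl huv.symm
  exact ⟨d.fst, d.snd, d.adj, fun h => hd₂ (h.symm.trans hd₁)⟩

theorem exists_adj_ne_zero {α β : Type*} [Zero α] (hG : G.Preconnected) {x : V → α}
    (hx : x ≠ 0) {f : V → β} (hf : ∃ i j, G.Adj i j ∧ f i ≠ f j) :
    ∃ i j, G.Adj i j ∧ x i ≠ 0 ∧ (f i ≠ f j ∨ x j = 0) := by
  rcases em (∃ v, x v = 0) with ⟨v, hv⟩ | h0
  swap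
  · obtain ⟨i, j, hij, hf⟩ := hf
    exact ⟨i, j, hij, not_exists.1 h0 i, Or.inl hf⟩
  obtain ⟨u, hu⟩ := Function.ne_iff.1 hx
  obtain ⟨d, -, hd₁, hd₂⟩ :=
    (hG u v).some.exists_boundary_dart {w | x w ≠ 0} hu (not_not.2 hv)
  exact ⟨d.fst, d.snd, d.adj, hd₁, Or.inr (not_not.1 hd₂)⟩

end SimpleGraph.Preconnected

section Sphere

variable [Fintype V] {p : ℝ}

theorem isCompact_setOf_unitSphere (hp : 0 < p) : IsCompact {x : V → ℝ | unitSphere p x} := by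
  refine Metric.isCompact_of_isClosed_isBounded (isClosed_eq (continuous_finsetSum _
    fun i _ => (continuous_apply i).abs.rpow_const fun _ => Or.inr hp.le) continuous_const) ?_
  refine (Metric.isBounded_closedBall (x := 0) (r := 1)).subset fun x hx => ?_
  rw [Metric.mem_closedBall, dist_zero_right, pi_norm_le_iff_of_nonneg zero_le_one]
  intro i
  have hi : |x i| ^ p ≤ 1 ^ p := by
    rw [Real.one_rpow, ← show ∑ i, |x i| ^ p = 1 from hx]
    exact single_le_sum (f := fun j => |x j| ^ p) (fun j _ => by positivity) (mem_univ i)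
  rw [Real.norm_eq_abs]
  exact (Real.rpow_le_rpow_iff (abs_nonneg _) zero_le_one hp).1 hi

theorem unitSphere_const [Nonempty V] (hp : p ≠ 0) :
    unitSphere p fun _ : V => ((Fintype.card V : ℝ)⁻¹) ^ p⁻¹ := by
  have hn : (0 : ℝ) < Fintype.card V := Nat.cast_pos.2 Fintype.card_pos
  simp only [unitSphere, sum_const, card_univ, nsmul_eq_mul]
  rw [abs_of_nonneg (by positivity), Real.rpow_inv_rpow (by positivity) hp,
    mul_inv_cancel₀ hn.ne']

theorem ne_zero_of_unitSphere (hp : p ≠ 0) {x : V → ℝ}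
    (hx : unitSphere p x) : x ≠ 0 := by
  rintro rfl
  simp [unitSphere, Real.zero_rpow hp] at hx

theorem continuous_Qp (G : SimpleGraph V) [Fintype G.edgeSet] (hp : 0 ≤ p) :
    Continuous (Qp G p) := by
  refine continuous_finsetSum _ fun e _ => ?_
  induction e using Sym2.ind with
  | h i j =>
    exact ((continuous_apply i).add (continuous_apply j)).abs.rpow_const fun _ => Or.inr hp

theorem exists_isGreatest_Qp [Nonempty V] (G : SimpleGraph V) [Fintype G.edgeSet] (hp : 0 < p) :
    ∃ x, unitSphere p x ∧
      IsGreatest {r | ∃ y, unitSphere p y ∧ Qp G p y = r} (Qp G p x) := by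
  obtain ⟨x, hx, hmax⟩ := (isCompact_setOf_unitSphere hp).exists_isMaxOn
    ⟨_, unitSphere_const hp.ne'⟩ (continuous_Qp G hp.le).continuousOn
  exact ⟨x, hx, ⟨x, hx, rfl⟩, by rintro _ ⟨y, hy, rfl⟩; exact hmax hy⟩

end Sphere

section Qp

variable [Fintype V] (G : SimpleGraph V) [DecidableRel G.Adj] {p : ℝ} {x : V → ℝ}

theorem sum_edgeFinset_rpow_div_degree (hdeg : ∀ v, 0 < G.degree v) (hx : unitSphere p x)
    (K : ℝ) :
    ∑ e ∈ G.edgeFinset, Sym2.lift ⟨fun i j => K * (|x i| ^ p / G.degree i)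
      + K * (|x j| ^ p / G.degree j), fun _ _ => add_comm _ _⟩ e = K := by
  rw [G.sum_edgeFinset_sym2_lift_add]
  calc _ = K * ∑ v, |x v| ^ p := by
        rw [mul_sum]
        refine sum_congr rfl fun v _ => ?_
        rw [nsmul_eq_mul, mul_left_comm, mul_div_cancel₀ _ (Nat.cast_ne_zero.2 (hdeg v).ne')]
    _ = K := by rw [show ∑ v, |x v| ^ p = 1 from hx, mul_one]

theorem Qp_le_of_forall_adj (hdeg : ∀ v, 0 < G.degree v) (hx : unitSphere p x) {K : ℝ}
    (h : ∀ i j, G.Adj i j →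
      |x i + x j| ^ p ≤ K * (|x i| ^ p / G.degree i) + K * (|x j| ^ p / G.degree j)) :
    Qp G p x ≤ K :=
  (sum_le_sum (G.forall_mem_edgeFinset_lift _ _ h)).trans_eq
    (sum_edgeFinset_rpow_div_degree G hdeg hx K)

theorem Qp_lt_of_forall_adj (hdeg : ∀ v, 0 < G.degree v) (hx : unitSphere p x) {K : ℝ}
    (h : ∀ i j, G.Adj i j →
      |x i + x j| ^ p ≤ K * (|x i| ^ p / G.degree i) + K * (|x j| ^ p / G.degree j))
    (hlt : ∃ i j, G.Adj i j ∧
      |x i + x j| ^ p < K * (|x i| ^ p / G.degree i) + K * (|x j| ^ p / G.degree j)) :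
    Qp G p x < K := by
  obtain ⟨i, j, hij, hlt⟩ := hlt
  exact (sum_lt_sum (G.forall_mem_edgeFinset_lift _ _ h)
    ⟨s(i, j), G.mem_edgeFinset.2 hij, hlt⟩).trans_eq
      (sum_edgeFinset_rpow_div_degree G hdeg hx K)

theorem Qp_eq_of_forall_adj (hdeg : ∀ v, 0 < G.degree v) (hx : unitSphere p x) {K : ℝ}
    (h : ∀ i j, G.Adj i j →
      |x i + x j| ^ p = K * (|x i| ^ p / G.degree i) + K * (|x j| ^ p / G.degree j)) :
    Qp G p x = K :=
  (sum_congr rfl (G.forall_mem_edgeFinset_lift _ _ h)).trans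
    (sum_edgeFinset_rpow_div_degree G hdeg hx K)

theorem Qp_le_two_rpow_mul (hp : 1 < p) (hdeg : ∀ v, 0 < G.degree v) {M : ℝ}
    (hM : ∀ i j, G.Adj i j →
      (((G.degree i : ℝ) ^ (p / (p - 1)) + (G.degree j : ℝ) ^ (p / (p - 1))) / 2)
        ^ ((p - 1) / p) ≤ M)
    (hx : unitSphere p x) : Qp G p x ≤ 2 ^ (p - 1) * M :=
  Qp_le_of_forall_adj G hdeg hx fun i j hij => abs_add_rpow_le_two_rpow_mul hp
    (Nat.cast_pos.2 (hdeg i)) (Nat.cast_pos.2 (hdeg j)) (hM i j hij)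

theorem Qp_lt_two_rpow_mul (hp : 1 < p) (hdeg : ∀ v, 0 < G.degree v) {M : ℝ}
    (hM : ∀ i j, G.Adj i j →
      (((G.degree i : ℝ) ^ (p / (p - 1)) + (G.degree j : ℝ) ^ (p / (p - 1))) / 2)
        ^ ((p - 1) / p) ≤ M)
    (hx : unitSphere p x)
    (hlt : ∃ i j, G.Adj i j ∧ x i ≠ 0 ∧ (G.degree i ≠ G.degree j ∨ x j = 0)) :
    Qp G p x < 2 ^ (p - 1) * M := by
  obtain ⟨i, j, hij, hxi, hdx⟩ := hlt
  refine Qp_lt_of_forall_adj G hdeg hx (fun i j hij => abs_add_rpow_le_two_rpow_mul hp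
    (Nat.cast_pos.2 (hdeg i)) (Nat.cast_pos.2 (hdeg j)) (hM i j hij)) ⟨i, j, hij, ?_⟩
  exact abs_add_rpow_lt_two_rpow_mul hp hxi (Nat.cast_pos.2 (hdeg i)) (Nat.cast_pos.2 (hdeg j))
    (hdx.imp_left Nat.cast_injective.ne) (hM i j hij)

theorem Qp_const_of_isRegularOfDegree {d : ℕ} (hreg : G.IsRegularOfDegree d) (hd : 0 < d)
    {c : ℝ} (hc : unitSphere p fun _ : V => c) : Qp G p (fun _ => c) = 2 ^ (p - 1) * d := by
  refine Qp_eq_of_forall_adj G (fun v => hreg.degree_eq v ▸ hd) hc fun i j _ => ?_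
  have hd' : (d : ℝ) ≠ 0 := Nat.cast_ne_zero.2 hd.ne'
  rw [hreg.degree_eq, hreg.degree_eq, ← two_mul, abs_mul, abs_two,
    Real.mul_rpow zero_le_two (abs_nonneg c), Real.rpow_sub_one two_ne_zero]
  field_simp
  ring

end Qp

theorem lamp_le_two_rpow_mul_and_eq_iff [Fintype V] [Nontrivial V]
    (G : SimpleGraph V) [DecidableRel G.Adj] (hc : G.Preconnected) {p : ℝ} (hp : 1 < p) {M : ℝ}
    (hM : ∀ i j, G.Adj i j →
      (((G.degree i : ℝ) ^ (p / (p - 1)) + (G.degree j : ℝ) ^ (p / (p - 1))) / 2)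
        ^ ((p - 1) / p) ≤ M)
    (hM_le : ∀ d, G.IsRegularOfDegree d → M ≤ d) :
    lamp G p ≤ 2 ^ (p - 1) * M ∧
      (lamp G p = 2 ^ (p - 1) * M ↔ ∃ d, G.IsRegularOfDegree d) := by
  obtain ⟨a⟩ : Nonempty V := inferInstance
  have hp0 : 0 < p := zero_lt_one.trans hp
  have hdeg : ∀ v, 0 < G.degree v := fun v => hc.degree_pos_of_nontrivial v
  obtain ⟨x, hx, hmax⟩ := exists_isGreatest_Qp G hp0
  rw [show lamp G p = Qp G p x from hmax.csSup_eq]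
  have hle := Qp_le_two_rpow_mul G hp hdeg hM hx
  refine ⟨hle, fun heq => ?_, fun ⟨d, hreg⟩ => le_antisymm hle ?_⟩
  · by_contra hirr
    obtain ⟨u, hu⟩ := not_forall.1 (not_exists.1 hirr (G.degree a))
    exact (Qp_lt_two_rpow_mul G hp hdeg hM hx (hc.exists_adj_ne_zero
      (ne_zero_of_unitSphere hp0.ne' hx) (hc.exists_adj_ne hu))).ne heq
  · have hd : 0 < d := hreg.degree_eq a ▸ hdeg a
    calc _ ≤ (2 : ℝ) ^ (p - 1) * d := by gcongr; exact hM_le d hreg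
      _ = Qp G p _ :=
          (Qp_const_of_isRegularOfDegree G hreg hd (unitSphere_const hp0.ne')).symm
      _ ≤ Qp G p x := hmax.2 ⟨_, unitSphere_const hp0.ne', rfl⟩

theorem stmt_17 [Fintype V] (G : SimpleGraph V) [DecidableRel G.Adj]
    (hc : G.Connected) (hE : G.edgeFinset.Nonempty) (p : ℝ) (hp : 1 < p) :
    lamp G p ≤ (2 : ℝ) ^ (p - 1) *
        G.edgeFinset.sup' hE (fun e =>
          Sym2.lift ⟨fun i j =>
            (((G.degree i : ℝ) ^ (p / (p - 1)) + (G.degree j : ℝ) ^ (p / (p - 1))) / 2)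
              ^ ((p - 1) / p), fun i j => by simp [add_comm]⟩ e) ∧
    (lamp G p = (2 : ℝ) ^ (p - 1) *
        G.edgeFinset.sup' hE (fun e =>
          Sym2.lift ⟨fun i j =>
            (((G.degree i : ℝ) ^ (p / (p - 1)) + (G.degree j : ℝ) ^ (p / (p - 1))) / 2)
              ^ ((p - 1) / p), fun i j => by simp [add_comm]⟩ e) ↔
      ∃ d, G.IsRegularOfDegree d) := by
  obtain ⟨e₀, he₀⟩ := hE
  have : Nontrivial V := by
    induction e₀ using Sym2.ind with
    | h a b => exact ⟨a, b, (G.mem_edgeFinset.1 he₀).ne⟩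
  refine lamp_le_two_rpow_mul_and_eq_iff G hc.preconnected hp
    (fun i j hij => le_sup'_of_le _ (b := s(i, j)) (G.mem_edgeFinset.2 hij) le_rfl)
    fun d hreg => sup'_le _ _ fun e _ => ?_
  induction e using Sym2.ind with
  | h i j =>
    simp only [Sym2.lift_mk, hreg.degree_eq]
    exact (mean_rpow_self hp (Nat.cast_nonneg d)).le
end
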